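/- Let R_T ∈ ℂ^{N_T×N_T} be Hermitian positive semidefinite with positive semidefinite square root R_T^{1/2}, let F ∈ ℂ^{N_T×K}, set T = R_T^{1/2} F F^H R_T^{1/2}, let λ_1,…,λ_{N_R} ≥ 0, and let N_S be a positive integer with N_S ≥ K. For each j with λ_j > 0 let δ_j be the unique nonnegative solution of the fixed-point equation δ_j = (1/N_S)·tr(T·(I_{N_T} + (λ_j/(1+λ_j δ_j))·T)^{-1}) (terms with λ_j = 0 vanish). Then, writing Ĩ = Σ_{j=1}^{N_R} log det(I_{N_T} + λ_j·T), one has ((N_S − min{K, rank(F F^H)})/N_S)·Ĩ ≤ Σ_{j=1}^{N_R} ρ̄(λ_j, T, N_S, δ_j) ≤ Ĩ, where ρ̄(λ,T,N_S,δ) = log det(I_{N_T} + (λ/(1+λδ))T) + N_S·log(1+λδ) − N_S·λδ/(1+λδ). -/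

import Mathlib

/-!
Diagonalise `T` (eigenvalues `tᵢ ≥ 0`) and put `aᵢ = λ tᵢ`, `c = 1 + λδ`. Both sides are then
values of `f = rhoBarProfile a N`, `f x = ∑ᵢ log (1 + aᵢ / x) + N log x - N (x - 1) / x`:
`ρ̄ = f c` and `log det (I + λT) = f 1`, and the fixed-point equation reads
`N (c - 1) = ∑ᵢ c aᵢ / (c + aᵢ)`, i.e. `f' c = 0`. At most `r = rank T ≤ N` of the `aᵢ` are
nonzero and `x ↦ x a / (x + a)` has slope at most `1`, so `f' ≤ 0` on `[1, c]`: the upper bound.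
For the lower bound, `f 1 - f c` is controlled by `log (1 + a) - log (1 + a / c) ≤ log c` on the
`r` nonzero terms, `(c - 1) / c ≤ log c`, and `N (c - 1) / c = ∑ᵢ aᵢ / (c + aᵢ) ≤ f 1`.
-/

open Matrix
open scoped ComplexOrder

/-- The fixed-point equation `δ = (1/N_S)·tr(T·(I + (ρ/(1+ρδ))·T)⁻¹)`. -/
def FixedPointEq {n : ℕ} (T : Matrix (Fin n) (Fin n) ℂ) (ρ : ℝ) (NS : ℕ) (δ : ℝ) : Prop :=
  (δ : ℂ) = (NS : ℂ)⁻¹ * (T * (1 + ((ρ / (1 + ρ * δ) : ℝ) : ℂ) • T)⁻¹).trace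

/-- `ρ̄(λ,T,N_S,δ)`, the closed-form per-eigenvalue sensing mutual information (eq. (7)). -/
noncomputable def rhoBar {n : ℕ} (lam : ℝ) (T : Matrix (Fin n) (Fin n) ℂ)
    (NS : ℕ) (δ : ℝ) : ℝ :=
  Real.log ((1 + ((lam / (1 + lam * δ) : ℝ) : ℂ) • T).det.re)
    + (NS : ℝ) * Real.log (1 + lam * δ) - (NS : ℝ) * (lam * δ / (1 + lam * δ))

section Profile

open Finset Real

variable {ι : Type*} [Fintype ι] {a : ι → ℝ}

lemma sum_le_mul_of_eq_zero_of_le {r b : ℝ} (hcard : (#{i | a i ≠ 0} : ℝ) ≤ r)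
    (hb : 0 ≤ b) {f : ι → ℝ} (hf0 : ∀ i, a i = 0 → f i = 0) (hfb : ∀ i, f i ≤ b) :
    ∑ i, f i ≤ r * b := by
  calc ∑ i, f i = ∑ i with a i ≠ 0, f i :=
        (sum_filter_of_ne fun i _ hfi ↦ mt (hf0 i) hfi).symm
    _ ≤ #{i | a i ≠ 0} • b := sum_le_card_nsmul _ _ _ fun i _ ↦ hfb i
    _ ≤ r * b := by rw [nsmul_eq_mul]; gcongr

noncomputable def rhoBarProfile (a : ι → ℝ) (N x : ℝ) : ℝ :=
  ∑ i, log (1 + a i / x) + N * log x - N * ((x - 1) / x)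

variable {N : ℝ}

lemma rhoBarProfile_one : rhoBarProfile a N 1 = ∑ i, log (1 + a i) := by
  simp [rhoBarProfile]

lemma hasDerivAt_rhoBarProfile (ha : ∀ i, 0 ≤ a i) {x : ℝ} (hx : 0 < x) :
    HasDerivAt (rhoBarProfile a N) ((N * (x - 1) - ∑ i, x * a i / (x + a i)) / x ^ 2) x := by
  have hlog (i : ι) :
      HasDerivAt (fun y ↦ log (1 + a i / y)) (-(x * a i / (x + a i)) / x ^ 2) x := by
    have hpos : 0 < 1 + a i / x := by have := ha i; positivity
    refine ((((hasDerivAt_const x (a i)).fun_div (hasDerivAt_id' x) hx.ne').const_add 1).log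
      hpos.ne').congr_deriv ?_
    field_simp
    ring
  have hquot : HasDerivAt (fun y ↦ (y - 1) / y) (1 / x ^ 2) x :=
    (((hasDerivAt_id' x).sub_const 1).fun_div (hasDerivAt_id' x) hx.ne').congr_deriv (by ring)
  refine (((HasDerivAt.fun_sum (u := univ) fun i _ ↦ hlog i).fun_add
    ((hasDerivAt_log hx.ne').const_mul N)).fun_sub (hquot.const_mul N)).congr_deriv ?_
  rw [← sum_div, sum_neg_distrib]
  field_simp
  ring

lemma mul_div_add_sub_mul_div_add_le {a x c : ℝ} (ha : 0 ≤ a) (hx : 0 < x) (hxc : x ≤ c) :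
    c * a / (c + a) - x * a / (x + a) ≤ c - x := by
  have hc : 0 < c := hx.trans_le hxc
  rw [div_sub_div _ _ (by positivity) (by positivity), div_le_iff₀ (by positivity)]
  nlinarith [mul_nonneg (sub_nonneg.2 hxc) (by positivity : 0 ≤ c * x + c * a + x * a)]

variable {c : ℝ}

lemma rhoBarProfile_antitoneOn (ha : ∀ i, 0 ≤ a i) (hcard : (#{i | a i ≠ 0} : ℝ) ≤ N)
    (hfix : N * (c - 1) = ∑ i, c * a i / (c + a i)) :
    AntitoneOn (rhoBarProfile a N) (Set.Icc 1 c) := by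
  have hderiv : ∀ x ∈ Set.Ici (1 : ℝ), HasDerivAt (rhoBarProfile a N)
      ((N * (x - 1) - ∑ i, x * a i / (x + a i)) / x ^ 2) x :=
    fun x hx ↦ hasDerivAt_rhoBarProfile ha (zero_lt_one.trans_le hx)
  refine antitoneOn_of_deriv_nonpos (convex_Icc 1 c)
    (fun x hx ↦ (hderiv x hx.1).continuousAt.continuousWithinAt)
    (fun x hx ↦ (hderiv x (interior_subset hx).1).differentiableAt.differentiableWithinAt)
    fun x hx ↦ ?_
  rw [interior_Icc] at hx
  rw [(hderiv x hx.1.le).deriv]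
  have hgap : ∑ i, (c * a i / (c + a i) - x * a i / (x + a i)) ≤ N * (c - x) :=
    sum_le_mul_of_eq_zero_of_le hcard (by linarith [hx.2]) (fun i hi ↦ by simp [hi])
      fun i ↦ mul_div_add_sub_mul_div_add_le (ha i) (by linarith [hx.1]) hx.2.le
  rw [sum_sub_distrib, ← hfix] at hgap
  exact div_nonpos_of_nonpos_of_nonneg (by linarith) (by positivity)

lemma rhoBarProfile_le_rhoBarProfile_one (ha : ∀ i, 0 ≤ a i)
    (hcard : (#{i | a i ≠ 0} : ℝ) ≤ N) (hc : 1 ≤ c)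
    (hfix : N * (c - 1) = ∑ i, c * a i / (c + a i)) :
    rhoBarProfile a N c ≤ rhoBarProfile a N 1 :=
  rhoBarProfile_antitoneOn ha hcard hfix (Set.left_mem_Icc.2 hc) (Set.right_mem_Icc.2 hc) hc

lemma mul_rhoBarProfile_one_le {r : ℝ} (ha : ∀ i, 0 ≤ a i) (hN : 0 < N)
    (hcard : (#{i | a i ≠ 0} : ℝ) ≤ r) (hr : r ≤ N)
    (hc : 1 ≤ c) (hfix : N * (c - 1) = ∑ i, c * a i / (c + a i)) :
    (N - r) / N * rhoBarProfile a N 1 ≤ rhoBarProfile a N c := by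
  have hc0 : 0 < c := zero_lt_one.trans_le hc
  have hlogc : (c - 1) / c ≤ log c := by
    simpa [sub_div, div_self hc0.ne'] using one_sub_inv_le_log_of_pos hc0
  have hshift : ∑ i, (log (1 + a i) - log (1 + a i / c)) ≤ r * log c := by
    refine sum_le_mul_of_eq_zero_of_le hcard (log_nonneg hc) (fun i hi ↦ by simp [hi])
      fun i ↦ ?_
    have hai := ha i
    rw [sub_le_iff_le_add, ← log_mul hc0.ne' (by positivity)]
    gcongr
    rw [mul_add, mul_div_cancel₀ _ hc0.ne']
    linarith
  have hfix_le : N * ((c - 1) / c) ≤ ∑ i, log (1 + a i) := by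
    rw [← mul_div_assoc, hfix, sum_div]
    gcongr with i
    have hai := ha i
    calc c * a i / (c + a i) / c = a i / (c + a i) := by field_simp
      _ ≤ a i / (1 + a i) := by gcongr
      _ = 1 - (1 + a i)⁻¹ := by field_simp; ring
      _ ≤ log (1 + a i) := one_sub_inv_le_log_of_pos (by positivity)
  rw [sum_sub_distrib] at hshift
  rw [rhoBarProfile_one, rhoBarProfile, div_mul_eq_mul_div, div_le_iff₀ hN]
  nlinarith [mul_le_mul_of_nonneg_left hshift hN.le,
    mul_le_mul_of_nonneg_left hfix_le ((Nat.cast_nonneg _).trans hcard),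
    mul_le_mul_of_nonneg_left hlogc (mul_nonneg hN.le (sub_nonneg.2 hr))]

end Profile

namespace Matrix.IsHermitian

variable {n 𝕜 : Type*} [Fintype n] [DecidableEq n] [RCLike 𝕜] {A : Matrix n n 𝕜}

lemma det_cfc (hA : A.IsHermitian) (f : ℝ → ℝ) :
    (cfc f A).det = ∏ i, (f (hA.eigenvalues i) : 𝕜) := by
  rw [hA.cfc_eq, IsHermitian.cfc, det_map, det_diagonal]
  rfl

lemma trace_cfc (hA : A.IsHermitian) (f : ℝ → ℝ) :
    (cfc f A).trace = ∑ i, (f (hA.eigenvalues i) : 𝕜) := by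
  rw [hA.cfc_eq, IsHermitian.cfc, trace_map, trace_diagonal]
  rfl

lemma one_add_smul_eq_cfc (hA : A.IsHermitian) (a : ℝ) :
    1 + a • A = cfc (fun x ↦ 1 + a * x) A := by
  have hA' : IsSelfAdjoint A := hA
  rw [cfc_const_add 1 (a * ·) A, cfc_const_mul_id a A, Algebra.algebraMap_eq_smul_one, one_smul]

lemma det_one_add_smul (hA : A.IsHermitian) (a : ℝ) :
    (1 + a • A).det = ∏ i, ((1 + a * hA.eigenvalues i : ℝ) : 𝕜) := by
  rw [hA.one_add_smul_eq_cfc, hA.det_cfc]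

lemma mul_inv_one_add_smul (hA : A.IsHermitian) (a : ℝ)
    (h : ∀ i, 1 + a * hA.eigenvalues i ≠ 0) :
    A * (1 + a • A)⁻¹ = cfc (fun x ↦ x / (1 + a * x)) A := by
  have hA' : IsSelfAdjoint A := hA
  have hfin : (spectrum ℝ A).Finite :=
    hA.spectrum_real_eq_range_eigenvalues ▸ Set.finite_range _
  have hspec : ∀ x ∈ spectrum ℝ A, 1 + a * x ≠ 0 := by
    rw [hA.spectrum_real_eq_range_eigenvalues]
    rintro _ ⟨i, rfl⟩
    exact h i
  rw [hA.one_add_smul_eq_cfc, nonsing_inv_eq_ringInverse,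
    ← cfc_inv (fun x ↦ 1 + a * x) A hspec]
  simp only [div_eq_mul_inv]
  rw [cfc_mul (fun x ↦ x) _ A (hfin.continuousOn _) (hfin.continuousOn _), cfc_id' ℝ A]

lemma trace_mul_inv_one_add_smul (hA : A.IsHermitian) (a : ℝ)
    (h : ∀ i, 1 + a * hA.eigenvalues i ≠ 0) :
    (A * (1 + a • A)⁻¹).trace =
      ∑ i, ((hA.eigenvalues i / (1 + a * hA.eigenvalues i) : ℝ) : 𝕜) := by
  rw [hA.mul_inv_one_add_smul a h, hA.trace_cfc]

end Matrix.IsHermitian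

namespace Matrix

lemma posSemidef_mul_mul_conjTranspose_mul {n m R : Type*} [Fintype n] [Fintype m] [CommRing R]
    [PartialOrder R] [StarRing R] [StarOrderedRing R] {A : Matrix n n R} (hA : A.IsHermitian)
    (F : Matrix n m R) : (A * F * Fᴴ * A).PosSemidef := by
  have h : A * F * Fᴴ * A = (A * F) * (A * F)ᴴ := by
    rw [conjTranspose_mul, hA.eq, Matrix.mul_assoc (A * F)]
  exact h ▸ posSemidef_self_mul_conjTranspose _

lemma rank_mul_mul_conjTranspose_mul_le {n R : Type*} [Fintype n] [Field R] [StarRing R] {K : ℕ}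
    (A : Matrix n n R) (F : Matrix n (Fin K) R) :
    (A * F * Fᴴ * A).rank ≤ min K (F * Fᴴ).rank := by
  have hFF : (A * F * Fᴴ * A).rank ≤ (F * Fᴴ).rank :=
    calc (A * F * Fᴴ * A).rank ≤ (A * (F * Fᴴ)).rank := by
          rw [← Matrix.mul_assoc]; exact rank_mul_le_left _ _
      _ ≤ (F * Fᴴ).rank := rank_mul_le_right _ _
  have hK : (F * Fᴴ).rank ≤ K :=
    (rank_mul_le_left _ _).trans ((rank_le_card_width F).trans (Fintype.card_fin K).le)
  exact le_min (hFF.trans hK) hFF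

end Matrix

namespace Matrix.PosSemidef

open Finset

variable {n : ℕ} {T : Matrix (Fin n) (Fin n) ℂ}

lemma log_det_one_add_smul_re (hT : T.PosSemidef) {a : ℝ} (ha : 0 ≤ a) :
    Real.log (1 + (a : ℂ) • T).det.re = ∑ i, Real.log (1 + a * hT.1.eigenvalues i) := by
  have hdet : (1 + (a : ℂ) • T).det.re = ∏ i, (1 + a * hT.1.eigenvalues i) := by
    rw [Complex.coe_smul, hT.1.det_one_add_smul, RCLike.ofReal_eq_complex_ofReal,
      ← Complex.ofReal_prod, Complex.ofReal_re]
  rw [hdet, Real.log_prod fun i _ ↦ ?_]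
  have := hT.eigenvalues_nonneg i
  positivity

lemma rhoBar_eq_rhoBarProfile (hT : T.PosSemidef) {lam δ : ℝ} (hlam : 0 ≤ lam) (hδ : 0 ≤ δ)
    (NS : ℕ) :
    rhoBar lam T NS δ = rhoBarProfile (lam • hT.1.eigenvalues) NS (1 + lam * δ) := by
  rw [rhoBar, hT.log_det_one_add_smul_re (by positivity), rhoBarProfile, add_sub_cancel_left]
  congr 3 with i
  simp only [Pi.smul_apply, smul_eq_mul, div_mul_eq_mul_div]

lemma _root_.FixedPointEq.mul_sub_one_eq_sum (hT : T.PosSemidef) {lam δ : ℝ} {NS : ℕ}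
    (hNS : NS ≠ 0) (hlam : 0 ≤ lam) (hδ : 0 ≤ δ) (h : FixedPointEq T lam NS δ) :
    (NS : ℝ) * (1 + lam * δ - 1) = ∑ i, (1 + lam * δ) * (lam • hT.1.eigenvalues) i /
      (1 + lam * δ + (lam • hT.1.eigenvalues) i) := by
  have ht := hT.eigenvalues_nonneg
  have hne : ∀ i, 1 + lam / (1 + lam * δ) * hT.1.eigenvalues i ≠ 0 := fun i ↦ by
    have := ht i
    positivity
  rw [FixedPointEq, Complex.coe_smul, hT.1.trace_mul_inv_one_add_smul _ hne,
    RCLike.ofReal_eq_complex_ofReal, ← Complex.ofReal_sum, ← Complex.ofReal_natCast,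
    ← Complex.ofReal_inv, ← Complex.ofReal_mul, Complex.ofReal_inj] at h
  rw [add_sub_cancel_left]
  -- `δ` also occurs on the right of `h`, so it is substituted on the left only
  conv_lhs => rw [h]
  rw [mul_left_comm, mul_inv_cancel_left₀ (Nat.cast_ne_zero.2 hNS), mul_sum]
  refine sum_congr rfl fun i _ ↦ ?_
  have := ht i
  simp only [Pi.smul_apply, smul_eq_mul]
  field_simp

lemma rhoBar_bounds (hT : T.PosSemidef) {NS r : ℕ} (hNS : 0 < NS) (hrank : T.rank ≤ r)
    (hr : r ≤ NS) {lam δ : ℝ} (hlam : 0 ≤ lam)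
    (hfix : 0 < lam → 0 ≤ δ ∧ FixedPointEq T lam NS δ) :
    ((NS : ℝ) - r) / NS * Real.log (1 + (lam : ℂ) • T).det.re ≤ rhoBar lam T NS δ ∧
      rhoBar lam T NS δ ≤ Real.log (1 + (lam : ℂ) • T).det.re := by
  rcases hlam.eq_or_lt with rfl | hpos
  · simp [rhoBar]
  obtain ⟨hδ, hfix⟩ := hfix hpos
  have hlog : Real.log (1 + (lam : ℂ) • T).det.re =
      rhoBarProfile (lam • hT.1.eigenvalues) NS 1 := by
    rw [hT.log_det_one_add_smul_re hlam, rhoBarProfile_one]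
    simp only [Pi.smul_apply, smul_eq_mul]
  have hcard : (#{i | (lam • hT.1.eigenvalues) i ≠ 0} : ℝ) ≤ r := by
    norm_cast
    calc #{i | (lam • hT.1.eigenvalues) i ≠ 0} ≤ #{i | hT.1.eigenvalues i ≠ 0} :=
          card_le_card fun i ↦ by
            simp only [mem_filter, mem_univ, true_and, Pi.smul_apply, smul_eq_mul]
            exact right_ne_zero_of_mul
      _ = T.rank := by rw [hT.1.rank_eq_card_non_zero_eigs, Fintype.card_subtype]
      _ ≤ r := hrank
  have ha (i : Fin n) : 0 ≤ (lam • hT.1.eigenvalues) i := mul_nonneg hlam (hT.eigenvalues_nonneg i)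
  have hc : 1 ≤ 1 + lam * δ := le_add_of_nonneg_right (mul_nonneg hlam hδ)
  have hstat := hfix.mul_sub_one_eq_sum hT hNS.ne' hlam hδ
  have hrR : (r : ℝ) ≤ NS := by exact_mod_cast hr
  rw [hT.rhoBar_eq_rhoBarProfile hlam hδ, hlog]
  exact ⟨mul_rhoBarProfile_one_le ha (by exact_mod_cast hNS) hcard hrR hc hstat,
    rhoBarProfile_le_rhoBarProfile_one ha (hcard.trans hrR) hc hstat⟩

end Matrix.PosSemidef

theorem smi_two_sided_bound_general {NT K NR NS : ℕ}
    (Rhalf : Matrix (Fin NT) (Fin NT) ℂ)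
    (hRhalf : Rhalf.PosSemidef)
    (F : Matrix (Fin NT) (Fin K) ℂ)
    (l : Fin NR → ℝ) (hl : ∀ j, 0 ≤ l j)
    (hNS1 : 1 ≤ NS) (hNSK : K ≤ NS)
    (δ : Fin NR → ℝ)
    (hδ : ∀ j, 0 < l j →
      0 ≤ δ j ∧ FixedPointEq (Rhalf * F * Fᴴ * Rhalf) (l j) NS (δ j)) :
    (((NS : ℝ) - (min K (F * Fᴴ).rank : ℕ)) / (NS : ℝ)) *
        (∑ j : Fin NR,
          Real.log ((1 + ((l j : ℝ) : ℂ) • (Rhalf * F * Fᴴ * Rhalf)).det.re)) ≤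
      ∑ j : Fin NR, rhoBar (l j) (Rhalf * F * Fᴴ * Rhalf) NS (δ j) ∧
    ∑ j : Fin NR, rhoBar (l j) (Rhalf * F * Fᴴ * Rhalf) NS (δ j) ≤
      ∑ j : Fin NR,
        Real.log ((1 + ((l j : ℝ) : ℂ) • (Rhalf * F * Fᴴ * Rhalf)).det.re) := by
  have hT : (Rhalf * F * Fᴴ * Rhalf).PosSemidef :=
    posSemidef_mul_mul_conjTranspose_mul hRhalf.isHermitian F
  have hj := fun j ↦ hT.rhoBar_bounds hNS1 (rank_mul_mul_conjTranspose_mul_le Rhalf F)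
    ((min_le_left _ _).trans hNSK) (hl j) (hδ j)
  rw [Finset.mul_sum]
  exact ⟨Finset.sum_le_sum fun j _ ↦ (hj j).1, Finset.sum_le_sum fun j _ ↦ (hj j).2⟩

/-- **Two-sided bound on the closed-form sensing mutual information** (underlying eq. (13)
of the paper): `((N_S − min{K, rank(FFᴴ)})/N_S)·Ĩ ≤ Σ_j ρ̄(λ_j,T,N_S,δ_j) ≤ Ĩ`, where
`Ĩ = Σ_j log det(I + λ_j T)` and `T = R_T^{1/2} F Fᴴ R_T^{1/2}`. -/
theorem smi_two_sided_bound {NT K NR NS : ℕ}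
    (RT Rhalf : Matrix (Fin NT) (Fin NT) ℂ)
    (hRT : RT.PosSemidef) (hRhalf : Rhalf.PosSemidef) (hsq : Rhalf * Rhalf = RT)
    (F : Matrix (Fin NT) (Fin K) ℂ)
    (l : Fin NR → ℝ) (hl : ∀ j, 0 ≤ l j)
    (hNS1 : 1 ≤ NS) (hNSK : K ≤ NS)
    (δ : Fin NR → ℝ)
    (hδ : ∀ j, 0 < l j →
      0 ≤ δ j ∧ FixedPointEq (Rhalf * F * Fᴴ * Rhalf) (l j) NS (δ j)) :
    (((NS : ℝ) - (min K (F * Fᴴ).rank : ℕ)) / (NS : ℝ)) *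
        (∑ j : Fin NR,
          Real.log ((1 + ((l j : ℝ) : ℂ) • (Rhalf * F * Fᴴ * Rhalf)).det.re)) ≤
      ∑ j : Fin NR, rhoBar (l j) (Rhalf * F * Fᴴ * Rhalf) NS (δ j) ∧
    ∑ j : Fin NR, rhoBar (l j) (Rhalf * F * Fᴴ * Rhalf) NS (δ j) ≤
      ∑ j : Fin NR,
        Real.log ((1 + ((l j : ℝ) : ℂ) • (Rhalf * F * Fᴴ * Rhalf)).det.re) :=
  smi_two_sided_bound_general Rhalf hRhalf F l hl hNS1 hNSK δ hδ
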